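/- Let G be a 3-non-compliant finite simple graph on exactly 14 vertices, and let u and v be adjacent vertices of G with deg_G(u) = deg_G(v) = 7. Then u and v have at least 3 common neighbors in G, i.e. |N_G(u) ∩ N_G(v)| ≥ 3. -/

import Mathlib

/-- `S` is a connected dominating set of the simple graph `G`: the subgraph of `G`
induced by `S` is connected (in particular `S` is nonempty) and every vertex
outside `S` has a neighbor in `S`. -/
def ConnDomSet {V : Type*} (G : SimpleGraph V) (S : Finset V) : Prop :=
  S.Nonempty ∧ (G.induce (↑S : Set V)).Connected ∧ ∀ v ∉ S, ∃ u ∈ S, G.Adj u v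

/-- A graph `G` is `k`-compliant if `G` or its complement has a connected dominating
set of cardinality at most `k`. -/
def Compliant {V : Type*} (G : SimpleGraph V) (k : ℕ) : Prop :=
  (∃ S : Finset V, S.card ≤ k ∧ ConnDomSet G S) ∨
    (∃ S : Finset V, S.card ≤ k ∧ ConnDomSet Gᶜ S)

/-!
With at most two common neighbours, `N(u) ∪ N(v)` has at least `7 + 7 - 2 = 12` of the 14
vertices, so the set `M` of vertices not dominated by `{u, v}` has at most two elements. If some
vertex `x` is adjacent to all of `M`, then `{u, v, x}` is a connected dominating set of `G`.
Otherwise every vertex misses some vertex of `M` in `G`, and `{v} ∪ M` is a connected dominating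
set of the complement, with `v` as its centre.
-/

open Finset SimpleGraph

section

variable {V : Type*}

lemma SimpleGraph.induce_connected_of_forall_adj (G : SimpleGraph V) {S : Set V} {c : V}
    (hc : c ∈ S) (hadj : ∀ x ∈ S, x ≠ c → G.Adj c x) : (G.induce S).Connected := by
  have hreach : ∀ z : S, (G.induce S).Reachable ⟨c, hc⟩ z := by
    rintro ⟨z, hz⟩
    rcases eq_or_ne z c with rfl | hne
    · rfl
    · exact Adj.reachable (by simpa using hadj z hz hne)
  exact (connected_iff _).2 ⟨fun x y => (hreach x).symm.trans (hreach y), ⟨⟨c, hc⟩⟩⟩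

lemma connDomSet_of_forall_adj {G : SimpleGraph V} {S : Finset V} {c : V} (hc : c ∈ S)
    (hadj : ∀ x ∈ S, x ≠ c → G.Adj c x) (hdom : ∀ w ∉ S, ∃ x ∈ S, G.Adj x w) :
    ConnDomSet G S :=
  ⟨⟨c, hc⟩, G.induce_connected_of_forall_adj (by simpa using hc) (by simpa using hadj),
    hdom⟩

lemma connDomSet_triple [DecidableEq V] {G : SimpleGraph V} {u v x : V} (huv : G.Adj u v)
    (hx : G.Adj u x ∨ G.Adj v x)
    (hdom : ∀ w ∉ ({u, v, x} : Finset V), ∃ y ∈ ({u, v, x} : Finset V), G.Adj y w) :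
    ConnDomSet G {u, v, x} := by
  rcases hx with hx | hx
  · refine connDomSet_of_forall_adj (c := u) (by simp) ?_ hdom
    simp only [mem_insert, mem_singleton]
    rintro y (rfl | rfl | rfl) hy
    exacts [absurd rfl hy, huv, hx]
  · refine connDomSet_of_forall_adj (c := v) (by simp) ?_ hdom
    simp only [mem_insert, mem_singleton]
    rintro y (rfl | rfl | rfl) hy
    exacts [huv.symm, absurd rfl hy, hx]

variable [Fintype V] [DecidableEq V] {G : SimpleGraph V} [DecidableRel G.Adj]

lemma compliant_three_of_card_compl_neighborFinset_union_le_two {u v : V} (huv : G.Adj u v)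
    (hM : (G.neighborFinset u ∪ G.neighborFinset v)ᶜ.card ≤ 2) : Compliant G 3 := by
  set M := (G.neighborFinset u ∪ G.neighborFinset v)ᶜ
  have hnotMem_M : ∀ w, w ∉ M ↔ G.Adj u w ∨ G.Adj v w := by simp [M, or_iff_not_imp_left]
  by_cases hcover : ∃ x, ∀ m ∈ M, G.Adj x m
  · obtain ⟨x, hx⟩ := hcover
    have hxM : x ∉ M := fun h => G.irrefl (hx x h)
    refine .inl ⟨{u, v, x}, card_le_three,
      connDomSet_triple huv ((hnotMem_M x).1 hxM) fun w hw => ?_⟩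
    by_cases hwM : w ∈ M
    · exact ⟨x, by simp, hx w hwM⟩
    · rcases (hnotMem_M w).1 hwM with h | h
      exacts [⟨u, by simp, h⟩, ⟨v, by simp, h⟩]
  · push Not at hcover
    refine .inr ⟨insert v M, (card_insert_le v M).trans (by omega), ?_⟩
    refine connDomSet_of_forall_adj (mem_insert_self v M) ?_ fun w hw => ?_
    · intro m hm hmv
      have hm : m ∈ M := (mem_insert.1 hm).resolve_left hmv
      exact (compl_adj G v m).2 ⟨Ne.symm hmv, fun h => (hnotMem_M m).2 (.inr h) hm⟩
    · obtain ⟨m, hm, hwm⟩ := hcover w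
      have hmw : m ≠ w := by rintro rfl; exact hw (mem_insert_of_mem hm)
      exact ⟨m, mem_insert_of_mem hm, (compl_adj G m w).2 ⟨hmw, fun h => hwm h.symm⟩⟩

end

theorem stmt8 {V : Type*} [Fintype V] [DecidableEq V] (G : SimpleGraph V)
    [DecidableRel G.Adj] (hV : Fintype.card V = 14) (hG : ¬ Compliant G 3)
    (u v : V) (hadj : G.Adj u v)
    (hdu : G.degree u = 7) (hdv : G.degree v = 7) :
    3 ≤ (G.neighborFinset u ∩ G.neighborFinset v).card := by
  by_contra! hcommon
  have hunion := card_union_add_card_inter (G.neighborFinset u) (G.neighborFinset v)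
  have hcompl := card_compl (G.neighborFinset u ∪ G.neighborFinset v)
  rw [card_neighborFinset_eq_degree, card_neighborFinset_eq_degree] at hunion
  exact hG (compliant_three_of_card_compl_neighborFinset_union_le_two hadj (by omega))
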